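/- arXiv:1903.09014 — 4 statements merged into one kernel-verified Lean document; each statement's English description precedes it below -/
import Mathlib

section
/- Let m, Q ∈ ℝ with m > |Q|, and set r₊ = m + √(m² − Q²). Then there exists a smooth, strictly increasing function u : [0,∞) → ℝ with u(0) = r₊ and u(s) → ∞ as s → ∞, such that for all s ≥ 0: u'(s) = √(1 − 2m/u(s) + Q²/u(s)²), 0 ≤ u'(s) < 1, and u''(s) = (m·u(s) − Q²)/u(s)³. -/
open Real Filter Set Function

/-- Existence and defining properties of the radial profile function `u_{m,Q}` of the
spatial sub-extremal Reissner–Nordström manifold of mass `m` and charge `Q` with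
`m > |Q|`: a smooth, strictly increasing function `u` on `[0,∞)` with
`u(0) = r₊ = m + √(m² - Q²)`, `u(s) → ∞`, satisfying
`u' = √(1 - 2m/u + Q²/u²)`, `0 ≤ u' < 1`, and `u'' = (mu - Q²)/u³`. -/
theorem stmt_5 (m Q : ℝ) (h : m > |Q|) :
    ∃ u : ℝ → ℝ,
      ContDiffOn ℝ (⊤ : ℕ∞) u (Set.Ici 0) ∧
      StrictMonoOn u (Set.Ici 0) ∧
      u 0 = m + Real.sqrt (m ^ 2 - Q ^ 2) ∧
      Filter.Tendsto u Filter.atTop Filter.atTop ∧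
      ∀ s ∈ Set.Ici (0 : ℝ),
        deriv u s = Real.sqrt (1 - 2 * m / u s + Q ^ 2 / (u s) ^ 2) ∧
        0 ≤ deriv u s ∧ deriv u s < 1 ∧
        deriv (deriv u) s = (m * u s - Q ^ 2) / (u s) ^ 3 := by
  have hm : 0 < m := (abs_nonneg Q).trans_lt h
  have hQm : Q ^ 2 < m ^ 2 := by nlinarith [abs_nonneg Q, sq_abs Q]
  set a := Real.sqrt (m ^ 2 - Q ^ 2) with ha_def
  have ha2 : a ^ 2 = m ^ 2 - Q ^ 2 := Real.sq_sqrt (by linarith)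
  have ha : 0 < a := Real.sqrt_pos.2 (by linarith)
  set φ : ℝ → ℝ := fun w => a * Real.sinh w + m * w with hφ_def
  have hφd : ∀ w, HasDerivAt φ (a * Real.cosh w + m) w := by
    intro w
    have h1 := (Real.hasDerivAt_sinh w).const_mul a
    have h2 := (hasDerivAt_id w).const_mul m
    have h3 := h1.add h2
    rw [mul_one] at h3
    exact h3
  have hDpos : ∀ w : ℝ, 0 < a * Real.cosh w + m := fun w =>
    add_pos (mul_pos ha (Real.cosh_pos w)) hm
  have hφmono : StrictMono φ := fun x y hxy => by
    have h1 : Real.sinh x < Real.sinh y := Real.sinh_lt_sinh.2 hxy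
    have h2 := mul_lt_mul_of_pos_left h1 ha
    have h3 := mul_lt_mul_of_pos_left hxy hm
    simp only [hφ_def]
    linarith
  have hφcont : Continuous φ :=
    (continuous_const.mul Real.continuous_sinh).add (continuous_const.mul continuous_id)
  have hφtop : Tendsto φ atTop atTop := by
    refine tendsto_atTop_mono' atTop ?_ (tendsto_id.const_mul_atTop hm)
    filter_upwards [eventually_ge_atTop (0 : ℝ)] with x hx
    have : 0 ≤ Real.sinh x := Real.sinh_nonneg_iff.2 hx
    simp only [hφ_def, id]
    nlinarith
  have hφbot : Tendsto φ atBot atBot := by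
    refine tendsto_atBot_mono' atBot ?_ (tendsto_id.const_mul_atBot hm)
    filter_upwards [eventually_le_atBot (0 : ℝ)] with x hx
    have : Real.sinh x ≤ 0 := by simpa using Real.sinh_le_sinh.2 hx
    simp only [hφ_def, id]
    nlinarith
  have hφsurj : Surjective φ := hφcont.surjective hφtop hφbot
  let e : ℝ ≃o ℝ := StrictMono.orderIsoOfSurjective φ hφmono hφsurj
  let He : ℝ ≃ₜ ℝ := e.toHomeomorph
  set ψ : ℝ → ℝ := fun s => He.symm s with hψ_def
  have hHe : (He : ℝ → ℝ) = φ := rfl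
  have hφψ : ∀ s, φ (ψ s) = s := fun s => He.apply_symm_apply s
  have hψφ : ∀ w, ψ (φ w) = w := fun w => He.symm_apply_apply w
  have hψcont : Continuous ψ := He.symm.continuous
  have hψmono : StrictMono ψ := fun x y hxy => by
    by_contra hc
    push_neg at hc
    have h2 := hφmono.monotone hc
    rw [hφψ, hφψ] at h2
    exact absurd h2 (not_le.2 hxy)
  have hψ0 : ψ 0 = 0 := by
    have h0 : φ 0 = 0 := by simp [hφ_def]
    calc ψ 0 = ψ (φ 0) := by rw [h0]
    _ = 0 := hψφ 0
  have hψd : ∀ s, HasDerivAt ψ ((a * Real.cosh (ψ s) + m)⁻¹) s := fun s =>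
    HasDerivAt.of_local_left_inverse hψcont.continuousAt (hφd (ψ s)) (hDpos (ψ s)).ne'
      (Eventually.of_forall hφψ)
  have hφcd : ContDiff ℝ (⊤ : ℕ∞) φ :=
    (contDiff_const.mul Real.contDiff_sinh).add (contDiff_const.mul contDiff_id)
  have hψcd : ContDiff ℝ (⊤ : ℕ∞) ψ :=
    He.contDiff_symm_deriv (f' := fun w => a * Real.cosh w + m)
      (fun w => (hDpos w).ne') (fun w => hφd w) (by rw [hHe]; exact hφcd)
  set u : ℝ → ℝ := fun s => m + a * Real.cosh (ψ s) with hu_def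
  have hupos : ∀ t, 0 < u t := fun t => add_pos hm (mul_pos ha (Real.cosh_pos _))
  have hud : ∀ t, HasDerivAt u (a * Real.sinh (ψ t) / (a * Real.cosh (ψ t) + m)) t := by
    intro t
    have h1 := ((Real.hasDerivAt_cosh (ψ t)).comp t (hψd t)).const_mul a
    have h2 : a * (Real.sinh (ψ t) * (a * Real.cosh (ψ t) + m)⁻¹)
        = a * Real.sinh (ψ t) / (a * Real.cosh (ψ t) + m) := by ring
    have h3 := h1.const_add m
    rw [h2] at h3
    exact h3
  have hderiv : ∀ t, deriv u t = a * Real.sinh (ψ t) / (a * Real.cosh (ψ t) + m) :=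
    fun t => (hud t).deriv
  have hDu : ∀ t, a * Real.cosh (ψ t) + m = u t := fun t => by
    simp only [hu_def]; ring
  refine ⟨u, ?_, ?_, ?_, ?_, ?_⟩
  · exact (contDiff_const.add (contDiff_const.mul (Real.contDiff_cosh.comp hψcd))).contDiffOn
  · intro x hx y hy hxy
    have h1 : ψ x < ψ y := hψmono hxy
    have h0x : 0 ≤ ψ x := by rw [← hψ0]; exact hψmono.monotone hx
    have h0y : 0 ≤ ψ y := by rw [← hψ0]; exact hψmono.monotone hy
    have h2 : Real.cosh (ψ x) < Real.cosh (ψ y) := by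
      rw [Real.cosh_lt_cosh, abs_of_nonneg h0x, abs_of_nonneg h0y]; exact h1
    simp only [hu_def]
    nlinarith
  · simp [hu_def, hψ0]
  · have h1 : Tendsto ψ atTop atTop :=
      tendsto_atTop_atTop_of_monotone hψmono.monotone fun b => ⟨φ b, (hψφ b).ge⟩
    have hcosh : Tendsto Real.cosh atTop atTop := by
      refine tendsto_atTop_mono' atTop ?_ tendsto_id
      filter_upwards [eventually_gt_atTop (0 : ℝ)] with x hx
      exact le_of_lt ((Real.self_lt_sinh_iff.2 hx).trans (Real.sinh_lt_cosh x))
    exact tendsto_atTop_add_const_left _ m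
      ((tendsto_id.const_mul_atTop ha).comp (hcosh.comp h1))
  · intro s hs
    have hw0 : 0 ≤ ψ s := by rw [← hψ0]; exact hψmono.monotone hs
    have hsinh0 : 0 ≤ Real.sinh (ψ s) := Real.sinh_nonneg_iff.2 hw0
    have hcsq := Real.cosh_sq (ψ s)
    have hune : u s ≠ 0 := (hupos s).ne'
    have hDne : a * Real.cosh (ψ s) + m ≠ 0 := (hDpos (ψ s)).ne'
    have husval : u s = m + a * Real.cosh (ψ s) := rfl
    refine ⟨?_, ?_, ?_, ?_⟩
    · rw [hderiv s, hDu s]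
      have hnum : (u s) ^ 2 - 2 * m * u s + Q ^ 2 = (a * Real.sinh (ψ s)) ^ 2 := by
        rw [husval]; linear_combination a ^ 2 * hcsq + ha2
      have key : 1 - 2 * m / u s + Q ^ 2 / (u s) ^ 2 = (a * Real.sinh (ψ s) / u s) ^ 2 := by
        rw [div_pow, ← hnum]
        field_simp
      rw [key, Real.sqrt_sq (div_nonneg (mul_nonneg ha.le hsinh0) (hupos s).le)]
    · rw [hderiv s]
      exact div_nonneg (mul_nonneg ha.le hsinh0) (hDpos (ψ s)).le
    · rw [hderiv s, div_lt_one (hDpos (ψ s))]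
      nlinarith [Real.sinh_lt_cosh (ψ s)]
    · have hEq : deriv u = fun t => a * Real.sinh (ψ t) / (a * Real.cosh (ψ t) + m) :=
        funext hderiv
      rw [hEq]
      have hnum : HasDerivAt (fun t => a * Real.sinh (ψ t))
          (a * Real.cosh (ψ s) * (a * Real.cosh (ψ s) + m)⁻¹) s := by
        simpa [mul_assoc] using ((Real.hasDerivAt_sinh (ψ s)).comp s (hψd s)).const_mul a
      have hden : HasDerivAt (fun t => a * Real.cosh (ψ t) + m)
          (a * Real.sinh (ψ s) * (a * Real.cosh (ψ s) + m)⁻¹) s := by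
        simpa [mul_assoc] using
          (((Real.hasDerivAt_cosh (ψ s)).comp s (hψd s)).const_mul a).add_const m
      have hd2 : deriv (fun t => a * Real.sinh (ψ t) / (a * Real.cosh (ψ t) + m)) s = _ :=
        (hnum.div hden hDne).deriv
      rw [hd2, husval]
      rw [div_eq_div_iff (by positivity) (by positivity)]
      field_simp
      ring_nf
      linear_combination
        (a ^ 2 * m ^ 3 + 3 * a ^ 3 * Real.cosh (ψ s) * m ^ 2
          + 3 * a ^ 4 * Real.cosh (ψ s) ^ 2 * m + a ^ 5 * Real.cosh (ψ s) ^ 3) * hcsq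
        + (m ^ 3 + 3 * a * Real.cosh (ψ s) * m ^ 2
          + 3 * a ^ 2 * Real.cosh (ψ s) ^ 2 * m + a ^ 3 * Real.cosh (ψ s) ^ 3) * ha2
end

section
/- Let m_e, Q, u, p ∈ ℝ with m_e > |Q|, u > |Q|, and p > 0, and let d ∈ ℝ satisfy d² = (1 − 2 m_e/u + Q²/u²)·(1 + p). Then (u/2)·(1 + Q²/u² − d²) = m_e + (p/2)·(2 m_e − u − Q²/u), and consequently (u/2)·(1 + Q²/u² − d²) > m_e + (p/2)·(m_e − u). -/
/-- Key computation in the proof of Proposition 4.6: after the bending deformation,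
which multiplies the squared radial derivative `1 - 2mₑ/u + Q²/u²` by `1 + p`, the
charged Hawking mass `(u/2)(1 + Q²/u² - d²)` equals `mₑ + (p/2)(2mₑ - u - Q²/u)` and
hence exceeds `mₑ + (p/2)(mₑ - u)`. -/
theorem stmt_9 (m_e Q u p d : ℝ) (h1 : m_e > |Q|) (h2 : u > |Q|) (hp : p > 0)
    (hd : d ^ 2 = (1 - 2 * m_e / u + Q ^ 2 / u ^ 2) * (1 + p)) :
    (u / 2) * (1 + Q ^ 2 / u ^ 2 - d ^ 2)
        = m_e + (p / 2) * (2 * m_e - u - Q ^ 2 / u) ∧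
    (u / 2) * (1 + Q ^ 2 / u ^ 2 - d ^ 2) > m_e + (p / 2) * (m_e - u) := by
  have hu : u > 0 := lt_of_le_of_lt (abs_nonneg Q) h2
  have heq : (u / 2) * (1 + Q ^ 2 / u ^ 2 - d ^ 2)
      = m_e + (p / 2) * (2 * m_e - u - Q ^ 2 / u) := by
    rw [hd]; field_simp; ring
  refine ⟨heq, ?_⟩
  rw [heq]
  have hq : Q ^ 2 / u ≤ |Q| := by
    rw [div_le_iff₀ hu]
    nlinarith [sq_abs Q, abs_nonneg Q]
  nlinarith [abs_nonneg Q]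
end

section
/- Let b₁ < a₂ be real numbers, z₁ ≥ z₂ real numbers, and T ∈ ℝ such that either (z₁ = z₂ and T = (a₂ − b₁)·z₁) or (z₂ < z₁ and (a₂ − b₁)·z₂ < T < (a₂ − b₁)·z₁). Then there exists a smooth function ζ : [b₁, a₂] → ℝ with ζ(b₁) = z₁, ζ(a₂) = z₂, ζ'(s) ≤ 0 for all s ∈ [b₁, a₂], and ∫_{b₁}^{a₂} ζ(x) dx = T. -/
lemma int_aux1 (b a L : ℝ) (hL : L = a - b) (h0 : L ≠ 0) (m : ℕ) :
    ∫ x in b..a, ((x - b) / L) ^ m = L / (m + 1) := by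
  have h1 : (∫ x in b..a, ((x - b) / L) ^ m) = ∫ y in b - b..a - b, (y / L) ^ m :=
    intervalIntegral.integral_comp_sub_right (fun y => (y / L) ^ m) b
  rw [h1, sub_self, ← hL]
  have h2 : (∫ y in (0:ℝ)..L, (y / L) ^ m) = L • ∫ u in (0:ℝ)/L..L/L, u ^ m :=
    intervalIntegral.integral_comp_div (fun u => u ^ m) h0
  rw [h2, zero_div, div_self h0, integral_pow]
  simp [smul_eq_mul]
  ring

lemma int_aux2 (b a L : ℝ) (hL : L = a - b) (h0 : L ≠ 0) (m : ℕ) :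
    ∫ x in b..a, (1 - (x - b) / L) ^ m = L / (m + 1) := by
  have hcongr : ∀ x : ℝ, (1 - (x - b) / L) ^ m = ((a - x) / L) ^ m := by
    intro x
    congr 1
    field_simp
    linarith [hL]
  simp only [hcongr]
  have h1 : (∫ x in b..a, ((a - x) / L) ^ m) = ∫ y in a - a..a - b, (y / L) ^ m :=
    intervalIntegral.integral_comp_sub_left (fun y => (y / L) ^ m) a
  rw [h1, sub_self, ← hL]
  have h2 : (∫ y in (0:ℝ)..L, (y / L) ^ m) = L • ∫ u in (0:ℝ)/L..L/L, u ^ m :=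
    intervalIntegral.integral_comp_div (fun u => u ^ m) h0
  rw [h2, zero_div, div_self h0, integral_pow]
  simp [smul_eq_mul]
  ring

/-- Auxiliary construction in the proof of the gluing Lemma 4.3: a smooth non-increasing
interpolant `ζ` on `[b₁, a₂]` between prescribed endpoint values `z₁ ≥ z₂`, with
prescribed integral `T` (equal to `(a₂ - b₁)z₁` if `z₁ = z₂`, and strictly between
`(a₂ - b₁)z₂` and `(a₂ - b₁)z₁` if `z₂ < z₁`). -/
theorem stmt_12 (b₁ a₂ z₁ z₂ T : ℝ) (hba : b₁ < a₂) (hz : z₂ ≤ z₁)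
    (hT : (z₁ = z₂ ∧ T = (a₂ - b₁) * z₁) ∨
          (z₂ < z₁ ∧ (a₂ - b₁) * z₂ < T ∧ T < (a₂ - b₁) * z₁)) :
    ∃ ζ : ℝ → ℝ,
      ContDiffOn ℝ (⊤ : ℕ∞) ζ (Set.Icc b₁ a₂) ∧
      ζ b₁ = z₁ ∧ ζ a₂ = z₂ ∧
      (∀ s ∈ Set.Icc b₁ a₂, deriv ζ s ≤ 0) ∧
      ∫ x in b₁..a₂, ζ x = T := by
  rcases hT with ⟨hzz, hTT⟩ | ⟨hzz, hT1, hT2⟩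
  · -- constant case
    refine ⟨fun _ => z₁, contDiffOn_const, rfl, hzz, ?_, ?_⟩
    · intro s _; simp
    · rw [intervalIntegral.integral_const, smul_eq_mul, hTT]
  · set L : ℝ := a₂ - b₁ with hLdef
    have hL : 0 < L := by simp [hLdef]; linarith
    have hL0 : L ≠ 0 := ne_of_gt hL
    have hzpos : 0 < z₁ - z₂ := by linarith
    set θ : ℝ := (T - L * z₂) / (L * (z₁ - z₂)) with hθdef
    have hden : 0 < L * (z₁ - z₂) := mul_pos hL hzpos
    have hθ0 : 0 < θ := div_pos (by linarith) hden
    have hθ1 : θ < 1 := by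
      rw [hθdef, div_lt_one hden]; linarith
    obtain ⟨n, hn⟩ := exists_nat_gt (1/θ + 1/(1-θ))
    set m : ℕ := n + 2 with hmdef
    have hm1 : (1:ℝ) ≤ (m:ℝ) := by
      have : (2:ℝ) ≤ (m:ℝ) := by exact_mod_cast Nat.le_add_left 2 n
      linarith
    have hmθ : 1 / θ ≤ (m:ℝ) + 1 := by
      have h1 : (0:ℝ) < 1/θ := by positivity
      have h2 : (0:ℝ) < 1/(1-θ) := one_div_pos.mpr (by linarith)
      have : (n:ℝ) ≤ (m:ℝ) := by exact_mod_cast Nat.le_add_right n 2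
      linarith
    have hmθ' : 1 / (1-θ) ≤ (m:ℝ) + 1 := by
      have h1 : (0:ℝ) < 1/θ := by positivity
      have h2 : (0:ℝ) < 1/(1-θ) := one_div_pos.mpr (by linarith)
      have : (n:ℝ) ≤ (m:ℝ) := by exact_mod_cast Nat.le_add_right n 2
      linarith
    have hkey1 : 1 ≤ θ * ((m:ℝ) + 1) := by
      rw [div_le_iff₀ hθ0] at hmθ; linarith [hmθ]
    have hkey2 : θ * ((m:ℝ) + 1) ≤ (m:ℝ) := by
      rw [div_le_iff₀ (by linarith : (0:ℝ) < 1 - θ)] at hmθ'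
      nlinarith
    have hm1pos : (0:ℝ) < (m:ℝ) - 1 := by
      have : (2:ℝ) ≤ (m:ℝ) := by exact_mod_cast Nat.le_add_left 2 n
      linarith
    set lam : ℝ := (θ * ((m:ℝ) + 1) - 1) / ((m:ℝ) - 1) with hlamdef
    have hlam0 : 0 ≤ lam := div_nonneg (by linarith) (le_of_lt hm1pos)
    have hlam1 : lam ≤ 1 := by
      rw [hlamdef, div_le_one hm1pos]; linarith
    set ζ : ℝ → ℝ := fun s =>
      z₂ + (z₁ - z₂) * (lam * (1 - ((s - b₁) / L) ^ m) + (1 - lam) * (1 - (s - b₁) / L) ^ m)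
      with hζdef
    have hmpos : 0 < m := by omega
    refine ⟨ζ, ?_, ?_, ?_, ?_, ?_⟩
    · apply ContDiff.contDiffOn
      fun_prop (disch := intros; exact hL0)
    · simp [hζdef, zero_pow hmpos.ne', one_pow]
    · simp only [hζdef]
      rw [show (a₂ - b₁) / L = 1 by rw [div_eq_one_iff_eq hL0]]
      simp [zero_pow hmpos.ne', one_pow]
    · -- derivative nonpositive
      intro s hs
      obtain ⟨hs1, hs2⟩ := hs
      set u : ℝ := (s - b₁) / L with hudef
      have hu0 : 0 ≤ u := div_nonneg (by linarith) (le_of_lt hL)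
      have hu1 : u ≤ 1 := by
        rw [hudef, div_le_one hL]; simp [hLdef]; linarith
      have hDu : HasDerivAt (fun s : ℝ => (s - b₁) / L) (1 / L) s := by
        have := ((hasDerivAt_id s).sub_const b₁).div_const L
        simpa using this
      have h1 : HasDerivAt (fun s : ℝ => 1 - ((s - b₁) / L) ^ m)
          (-((m : ℝ) * u ^ (m - 1) * (1 / L))) s := by
        have := (hDu.pow m).const_sub 1
        simpa [hudef] using this
      have h2 : HasDerivAt (fun s : ℝ => (1 - (s - b₁) / L) ^ m)
          ((m : ℝ) * (1 - u) ^ (m - 1) * (-(1 / L))) s := by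
        have hin : HasDerivAt (fun s : ℝ => 1 - (s - b₁) / L) (-(1 / L)) s := hDu.const_sub 1
        have := hin.fun_pow m
        simpa [hudef] using this
      have hD : HasDerivAt ζ
          ((z₁ - z₂) * (lam * (-((m : ℝ) * u ^ (m - 1) * (1 / L)))
            + (1 - lam) * ((m : ℝ) * (1 - u) ^ (m - 1) * (-(1 / L))))) s := by
        have := ((h1.const_mul lam).add (h2.const_mul (1 - lam))).const_mul (z₁ - z₂)
        have := this.const_add z₂
        simpa [hζdef] using this
      rw [hD.deriv]
      have hX : 0 ≤ (m : ℝ) * u ^ (m - 1) * (1 / L) := by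
        apply mul_nonneg (mul_nonneg (Nat.cast_nonneg m) (pow_nonneg hu0 _))
        positivity
      have hY : 0 ≤ (m : ℝ) * (1 - u) ^ (m - 1) * (1 / L) := by
        apply mul_nonneg (mul_nonneg (Nat.cast_nonneg m) (pow_nonneg (by linarith) _))
        positivity
      have hE : 0 ≤ (z₁ - z₂) * (lam * ((m : ℝ) * u ^ (m - 1) * (1 / L))
            + (1 - lam) * ((m : ℝ) * (1 - u) ^ (m - 1) * (1 / L))) := by
        apply mul_nonneg (le_of_lt hzpos)
        exact add_nonneg (mul_nonneg hlam0 hX) (mul_nonneg (by linarith) hY)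
      nlinarith [hE]
    · -- integral
      have hcongr : ∀ x : ℝ, ζ x = (z₂ + (z₁ - z₂) * lam)
          + (-(z₁ - z₂) * lam) * ((x - b₁) / L) ^ m
          + ((z₁ - z₂) * (1 - lam)) * (1 - (x - b₁) / L) ^ m := by
        intro x; simp only [hζdef]; ring
      have hI1 : IntervalIntegrable (fun x : ℝ => (-(z₁ - z₂) * lam) * ((x - b₁) / L) ^ m)
          MeasureTheory.volume b₁ a₂ := (by fun_prop : Continuous _).intervalIntegrable _ _
      have hI2 : IntervalIntegrable (fun x : ℝ => ((z₁ - z₂) * (1 - lam)) * (1 - (x - b₁) / L) ^ m)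
          MeasureTheory.volume b₁ a₂ := (by fun_prop : Continuous _).intervalIntegrable _ _
      calc ∫ x in b₁..a₂, ζ x
          = ∫ x in b₁..a₂, ((z₂ + (z₁ - z₂) * lam)
              + ((-(z₁ - z₂) * lam) * ((x - b₁) / L) ^ m
                + ((z₁ - z₂) * (1 - lam)) * (1 - (x - b₁) / L) ^ m)) := by
            apply intervalIntegral.integral_congr
            intro x _; rw [hcongr x]; ring
        _ = (a₂ - b₁) * (z₂ + (z₁ - z₂) * lam)
              + ((-(z₁ - z₂) * lam) * (L / (m + 1))
                + ((z₁ - z₂) * (1 - lam)) * (L / (m + 1))) := by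
            rw [intervalIntegral.integral_add intervalIntegrable_const (hI1.add hI2),
              intervalIntegral.integral_add hI1 hI2,
              intervalIntegral.integral_const_mul, intervalIntegral.integral_const_mul,
              intervalIntegral.integral_const, smul_eq_mul,
              int_aux1 b₁ a₂ L hLdef hL0 m, int_aux2 b₁ a₂ L hLdef hL0 m]
        _ = T := by
            have hkey : lam * ((m:ℝ) - 1) = θ * ((m:ℝ) + 1) - 1 := by
              rw [hlamdef, div_mul_cancel₀ _ (ne_of_gt hm1pos)]
            have hTθ : (z₁ - z₂) * (L * θ) = T - L * z₂ := by
              rw [hθdef, mul_div_assoc']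
              field_simp
            have hmne : ((m:ℝ) + 1) ≠ 0 := by positivity
            have hsum : lam + (1 - 2 * lam) / ((m:ℝ) + 1) = θ := by
              have h : (1 - 2 * lam) / ((m:ℝ) + 1) = θ - lam := by
                rw [div_eq_iff hmne]; linear_combination hkey
              rw [h]; ring
            have step : (a₂ - b₁) * (z₂ + (z₁ - z₂) * lam)
                + ((-(z₁ - z₂) * lam) * (L / (m + 1))
                  + ((z₁ - z₂) * (1 - lam)) * (L / (m + 1)))
                = L * z₂ + (z₁ - z₂) * L * (lam + (1 - 2 * lam) / ((m:ℝ) + 1)) := by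
              rw [← hLdef]; ring
            rw [step, hsum]
            linear_combination hTθ
end

section
/- Let r₀, Q ∈ ℝ with r₀ > |Q| ≥ 0, and let S > 0. Then there exists c₀ > 0 such that for every c ∈ (0, c₀), the function f(s) = r₀·√(1 + c·s²) satisfies f''(s) < (1/(2 f(s)))·(1 − f'(s)² − Q²/f(s)²) for all s ∈ [0, S]. -/
/-!
With `g = 1 + c s²` one has `f' = r₀ c s / √g` and `f'' = r₀ c / g^{3/2}`, so after clearing the
positive factor `2 r₀³ g^{3/2}` the charged DEC inequality becomes the polynomial inequality
`r₀⁴ (2c + c² s²) + Q² < r₀² (1 + c s²)`. At `c = 0` this is `Q² < r₀²`, and the left side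
exceeds `Q²` by at most `c r₀⁴ (2 + S²)` when `c < 1` and `s ≤ S`, so it persists for small `c`.
-/

open Real Set

section RoundProfile

variable {c : ℝ}

theorem hasDerivAt_mul_sqrt_one_add_mul_sq (r : ℝ) (hc : 0 ≤ c) (t : ℝ) :
    HasDerivAt (fun t => r * √(1 + c * t ^ 2)) (r * c * t / √(1 + c * t ^ 2)) t := by
  have hg : HasDerivAt (fun t : ℝ => 1 + c * t ^ 2) (c * (2 * t)) t := by
    simpa using ((hasDerivAt_pow 2 t).const_mul c).const_add 1
  refine ((hg.sqrt (by positivity)).const_mul r).congr_deriv ?_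
  field_simp

theorem deriv_mul_sqrt_one_add_mul_sq (r : ℝ) (hc : 0 ≤ c) :
    deriv (fun t => r * √(1 + c * t ^ 2)) = fun t => r * c * t / √(1 + c * t ^ 2) :=
  funext fun t => (hasDerivAt_mul_sqrt_one_add_mul_sq r hc t).deriv

theorem hasDerivAt_mul_div_sqrt_one_add_mul_sq (r : ℝ) (hc : 0 ≤ c) (s : ℝ) :
    HasDerivAt (fun t => r * c * t / √(1 + c * t ^ 2))
      (r * c / ((1 + c * s ^ 2) * √(1 + c * s ^ 2))) s := by
  have hg : 0 < 1 + c * s ^ 2 := by positivity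
  have hsqrt := hasDerivAt_mul_sqrt_one_add_mul_sq 1 hc s
  simp only [one_mul] at hsqrt
  have hlin : HasDerivAt (fun t : ℝ => r * c * t) (r * c) s := by
    simpa using (hasDerivAt_id s).const_mul (r * c)
  refine (hlin.div hsqrt (by positivity)).congr_deriv ?_
  have hsq : √(1 + c * s ^ 2) ^ 2 = 1 + c * s ^ 2 := sq_sqrt hg.le
  field_simp
  rw [hsq]
  ring

theorem deriv_deriv_mul_sqrt_one_add_mul_sq (r : ℝ) (hc : 0 ≤ c) (s : ℝ) :
    deriv (deriv (fun t => r * √(1 + c * t ^ 2))) s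
      = r * c / ((1 + c * s ^ 2) * √(1 + c * s ^ 2)) := by
  rw [deriv_mul_sqrt_one_add_mul_sq r hc]
  exact (hasDerivAt_mul_div_sqrt_one_add_mul_sq r hc s).deriv

theorem round_profile_charged_dec_iff {r : ℝ} (Q : ℝ) (hr : 0 < r) (hc : 0 ≤ c) (s : ℝ) :
    r * c / ((1 + c * s ^ 2) * √(1 + c * s ^ 2))
        < 1 / (2 * (r * √(1 + c * s ^ 2))) *
          (1 - (r * c * s / √(1 + c * s ^ 2)) ^ 2 - Q ^ 2 / (r * √(1 + c * s ^ 2)) ^ 2)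
      ↔ r ^ 4 * (2 * c + c ^ 2 * s ^ 2) + Q ^ 2 < r ^ 2 * (1 + c * s ^ 2) := by
  have hg : 0 < 1 + c * s ^ 2 := by positivity
  have ha : 0 < √(1 + c * s ^ 2) := sqrt_pos.mpr hg
  have hsq : √(1 + c * s ^ 2) ^ 2 = 1 + c * s ^ 2 := sq_sqrt hg.le
  set a := √(1 + c * s ^ 2)
  have hdiff : 1 / (2 * (r * a)) * (1 - (r * c * s / a) ^ 2 - Q ^ 2 / (r * a) ^ 2)
        - r * c / ((1 + c * s ^ 2) * a)
      = (r ^ 2 * (1 + c * s ^ 2) - (r ^ 4 * (2 * c + c ^ 2 * s ^ 2) + Q ^ 2))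
        / (2 * r ^ 3 * a ^ 3) := by
    rw [← hsq]
    field_simp
    ring
  rw [← sub_pos, hdiff, div_pos_iff_of_pos_right (by positivity), sub_pos]

end RoundProfile

theorem exists_pos_forall_charged_dec_margin {r Q : ℝ} (hQ : Q ^ 2 < r ^ 2) (S : ℝ) :
    ∃ c₀ > 0, ∀ c ∈ Ioo (0 : ℝ) c₀, ∀ s ∈ Icc (0 : ℝ) S,
      r ^ 4 * (2 * c + c ^ 2 * s ^ 2) + Q ^ 2 < r ^ 2 * (1 + c * s ^ 2) := by
  set K := r ^ 4 * (2 + S ^ 2) + 1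
  have hK : 0 < K := by positivity
  have hδ : 0 < r ^ 2 - Q ^ 2 := sub_pos.mpr hQ
  refine ⟨min 1 ((r ^ 2 - Q ^ 2) / K), by positivity, fun c ⟨hc0, hc⟩ s ⟨hs0, hsS⟩ => ?_⟩
  have hc1 : c < 1 := hc.trans_le (min_le_left _ _)
  have hcK : c * K < r ^ 2 - Q ^ 2 :=
    (lt_div_iff₀ hK).mp (hc.trans_le (min_le_right _ _))
  have hs2 : s ^ 2 ≤ S ^ 2 := pow_le_pow_left₀ hs0 hsS 2
  have hcs : c * s ^ 2 ≤ S ^ 2 := by nlinarith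
  have hlhs : r ^ 4 * (2 * c + c ^ 2 * s ^ 2) ≤ c * K := by
    have := mul_le_mul_of_nonneg_left hcs (mul_nonneg (pow_nonneg (sq_nonneg r) 2) hc0.le)
    simp only [K]
    nlinarith
  nlinarith [mul_nonneg (sq_nonneg r) (mul_nonneg hc0.le (sq_nonneg s))]

theorem stmt_14_general (r₀ Q S : ℝ) (hr : r₀ > |Q|) :
    ∃ c₀ > 0, ∀ c ∈ Set.Ioo (0 : ℝ) c₀, ∀ s ∈ Set.Icc (0 : ℝ) S,
      deriv (deriv (fun t => r₀ * Real.sqrt (1 + c * t ^ 2))) s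
        < (1 / (2 * (r₀ * Real.sqrt (1 + c * s ^ 2)))) *
            (1 - (deriv (fun t => r₀ * Real.sqrt (1 + c * t ^ 2)) s) ^ 2
              - Q ^ 2 / (r₀ * Real.sqrt (1 + c * s ^ 2)) ^ 2) := by
  have hr₀ : 0 < r₀ := (abs_nonneg Q).trans_lt hr
  have hQ : Q ^ 2 < r₀ ^ 2 := sq_lt_sq.mpr (by rwa [abs_of_pos hr₀])
  obtain ⟨c₀, hc₀, hmargin⟩ := exists_pos_forall_charged_dec_margin hQ S
  refine ⟨c₀, hc₀, fun c hc s hs => ?_⟩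
  rw [deriv_deriv_mul_sqrt_one_add_mul_sq r₀ hc.1.le, deriv_mul_sqrt_one_add_mul_sq r₀ hc.1.le,
    round_profile_charged_dec_iff Q hr₀ hc.1.le]
  exact hmargin c hc s hs

/-- Verification in the proof of Theorem 5.3: for `r₀ > |Q|`, the round cylindrical
profile `f(s) = r₀ √(1 + c s²)` satisfies the strict charged DEC inequality
`f'' < (1/(2f))(1 - (f')² - Q²/f²)` on `[0, S]` for all sufficiently small `c > 0`. -/
theorem stmt_14 (r₀ Q S : ℝ) (hr : r₀ > |Q|) (hQ : |Q| ≥ 0) (hS : S > 0) :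
    ∃ c₀ > 0, ∀ c ∈ Set.Ioo (0 : ℝ) c₀, ∀ s ∈ Set.Icc (0 : ℝ) S,
      deriv (deriv (fun t => r₀ * Real.sqrt (1 + c * t ^ 2))) s
        < (1 / (2 * (r₀ * Real.sqrt (1 + c * s ^ 2)))) *
            (1 - (deriv (fun t => r₀ * Real.sqrt (1 + c * t ^ 2)) s) ^ 2
              - Q ^ 2 / (r₀ * Real.sqrt (1 + c * s ^ 2)) ^ 2) :=
  stmt_14_general r₀ Q S hr
end
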